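/- Compatibility of μ with Gale duality: let 𝒱 be a polarized arrangement. For every b ∈ 𝔹, the complement b^c = I∖b is a basis of the Gale dual 𝒱^∨, and μ(b) = μ^∨(b^c), where μ^∨ : 𝔹^∨ → 𝒫^∨ = 𝒫 is the map μ formed for 𝒱^∨. -/
import Mathlib


open Finset

variable {I : Type*} [Fintype I]

/-- The standard dot product on `I → ℝ`. -/
def dot (x y : I → ℝ) : ℝ := ∑ i, x i * y i

/-- The orthogonal complement of a subspace of `I → ℝ` with respect to the standard
inner product. -/
def perp (V : Submodule ℝ (I → ℝ)) : Submodule ℝ (I → ℝ) where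
  carrier := {x | ∀ v ∈ V, dot x v = 0}
  zero_mem' := fun v _ => by simp [dot]
  add_mem' := fun {a b} ha hb v hv => by
    have h : dot (a + b) v = dot a v + dot b v := by
      simp [dot, add_mul, Finset.sum_add_distrib]
    rw [h, ha v hv, hb v hv, add_zero]
  smul_mem' := fun c {a} ha v hv => by
    have h : dot (c • a) v = c * dot a v := by
      simp [dot, Finset.mul_sum, mul_assoc]
    rw [h, ha v hv, mul_zero]

/-- A sign vector: a function `I → ℝ` all of whose values are `+1` or `-1`. -/
def IsSign (α : I → ℝ) : Prop := ∀ i, α i = 1 ∨ α i = -1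

/-- A polarized arrangement `(V, η, ξ)`, where `η ∈ ℝ^I/V` is recorded by an arbitrary
lift `η : I → ℝ` and the covector `ξ ∈ V*` is recorded by an arbitrary vector `ξ : I → ℝ`
with `ξ(v) = ⟨ξ, v⟩` for `v ∈ V`.  Condition (a): every lift of `η` has at least
`|I| - dim V` nonzero coordinates; condition (b): every representative of `ξ` has at
least `dim V` nonzero coordinates. -/
structure PolArr (I : Type*) [Fintype I] where
  V : Submodule ℝ (I → ℝ)
  η : I → ℝ
  ξ : I → ℝ
  cond_a : ∀ x : I → ℝ, x - η ∈ V →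
    Fintype.card I - Module.finrank ℝ V ≤ Set.ncard {i | x i ≠ 0}
  cond_b : ∀ x : I → ℝ, x - ξ ∈ perp V →
    Module.finrank ℝ V ≤ Set.ncard {i | x i ≠ 0}

/-- The chamber `Δ_α ⊆ V_η` determined by a sign vector `α`. -/
def Delta (V : Submodule ℝ (I → ℝ)) (η α : I → ℝ) : Set (I → ℝ) :=
  {x | x - η ∈ V ∧ ∀ i, 0 ≤ α i * x i}

/-- The cone `Σ_α ⊆ V` determined by a sign vector `α`. -/
def SigCone (V : Submodule ℝ (I → ℝ)) (α : I → ℝ) : Set (I → ℝ) :=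
  {x | x ∈ V ∧ ∀ i, 0 ≤ α i * x i}

/-- `α` is feasible if `Δ_α ≠ ∅`. -/
def Feasible (V : Submodule ℝ (I → ℝ)) (η α : I → ℝ) : Prop := (Delta V η α).Nonempty

/-- `α` is bounded if `ξ(Σ_α)` is bounded above. -/
def Bounded (V : Submodule ℝ (I → ℝ)) (ξ α : I → ℝ) : Prop :=
  BddAbove (dot ξ '' SigCone V α)

/-- The flat `H_S = {x ∈ V_η : x_i = 0 for all i ∈ S}`. -/
def Flat (V : Submodule ℝ (I → ℝ)) (η : I → ℝ) (S : Set I) : Set (I → ℝ) :=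
  {x | x - η ∈ V ∧ ∀ i ∈ S, x i = 0}

/-- A basis: a subset `b ⊆ I` with `|b| = dim V` and `H_b ≠ ∅`. -/
def IsBasisSet (V : Submodule ℝ (I → ℝ)) (η : I → ℝ) (b : Finset I) : Prop :=
  b.card = Module.finrank ℝ V ∧ (Flat V η ↑b).Nonempty

/-- `ξ` attains its maximum on `Δ_α` exactly at the point `H_b`. -/
def OptAt (V : Submodule ℝ (I → ℝ)) (η ξ : I → ℝ) (b : Finset I) (α : I → ℝ) : Prop :=
  ∃ p ∈ Flat V η ↑b, p ∈ Delta V η α ∧ ∀ x ∈ Delta V η α, x ≠ p → dot ξ (x - p) < 0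

/-- `α = μ(b)`: the bounded feasible sign vector on whose chamber `ξ` is maximized
exactly at `H_b`. -/
def MuSpec (V : Submodule ℝ (I → ℝ)) (η ξ : I → ℝ) (b : Finset I) (α : I → ℝ) : Prop :=
  Feasible V η α ∧ Bounded V ξ α ∧ OptAt V η ξ b α

/-- The coordinate subspace of vectors vanishing on `S`. -/
def zeroOn (S : Set I) : Submodule ℝ (I → ℝ) where
  carrier := {x | ∀ i ∈ S, x i = 0}
  zero_mem' := fun i _ => rfl
  add_mem' := fun {a b} ha hb i hi => by simp [Pi.add_apply, ha i hi, hb i hi]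
  smul_mem' := fun c {a} ha i hi => by simp [Pi.smul_apply, ha i hi]

section DotLemmas

variable {I : Type*} [Fintype I]

lemma dot_comm (x y : I → ℝ) : dot x y = dot y x :=
  Finset.sum_congr rfl fun i _ => mul_comm _ _

lemma dot_add_left (x y z : I → ℝ) : dot (x + y) z = dot x z + dot y z := by
  simp [dot, add_mul, Finset.sum_add_distrib]

lemma dot_sub_left (x y z : I → ℝ) : dot (x - y) z = dot x z - dot y z := by
  simp [dot, sub_mul, Finset.sum_sub_distrib]

lemma dot_smul_left (c : ℝ) (x y : I → ℝ) : dot (c • x) y = c * dot x y := by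
  simp [dot, Finset.mul_sum, mul_assoc]

lemma dot_add_right (x y z : I → ℝ) : dot x (y + z) = dot x y + dot x z := by
  rw [dot_comm, dot_add_left, dot_comm y, dot_comm z]

lemma dot_sub_right (x y z : I → ℝ) : dot x (y - z) = dot x y - dot x z := by
  rw [dot_comm, dot_sub_left, dot_comm y, dot_comm z]

lemma dot_smul_right (c : ℝ) (x y : I → ℝ) : dot x (c • y) = c * dot x y := by
  rw [dot_comm, dot_smul_left, dot_comm]

lemma mem_perp_iff {V : Submodule ℝ (I → ℝ)} {x : I → ℝ} :
    x ∈ perp V ↔ ∀ v ∈ V, dot x v = 0 := Iff.rfl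

lemma le_perp_perp (V : Submodule ℝ (I → ℝ)) : V ≤ perp (perp V) := fun v hv w hw => by
  rw [dot_comm]; exact hw v hv

lemma mem_zeroOn_iff {S : Set I} {x : I → ℝ} : x ∈ zeroOn S ↔ ∀ i ∈ S, x i = 0 := Iff.rfl

lemma finrank_zeroOn (s : Finset I) [DecidableEq I] :
    Module.finrank ℝ (zeroOn (↑s : Set I)) = Fintype.card I - s.card := by
  classical
  let f : (I → ℝ) →ₗ[ℝ] ({ x // x ∈ s } → ℝ) := LinearMap.funLeft ℝ ℝ Subtype.val
  have hker : LinearMap.ker f = zeroOn (↑s : Set I) := by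
    ext x
    simp only [LinearMap.mem_ker, mem_zeroOn_iff]
    constructor
    · intro h i hi
      exact congrFun h ⟨i, hi⟩
    · intro h
      funext i
      exact h i.1 i.2
  have hsurj : Function.Surjective f :=
    LinearMap.funLeft_surjective_of_injective ℝ ℝ _ Subtype.val_injective
  have hrn := LinearMap.finrank_range_add_finrank_ker f
  rw [hker, LinearMap.range_eq_top.mpr hsurj] at hrn
  have h1 : Module.finrank ℝ (⊤ : Submodule ℝ ({ x // x ∈ s } → ℝ)) = s.card := by
    rw [finrank_top, Module.finrank_fintype_fun_eq_card, Fintype.card_coe]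
  have h2 : Module.finrank ℝ (I → ℝ) = Fintype.card I :=
    Module.finrank_fintype_fun_eq_card ℝ
  rw [h1, h2] at hrn
  omega

/-- The map sending `x` to the functional `v ↦ ⟨x, v⟩` on `V`. -/
def toDualV (V : Submodule ℝ (I → ℝ)) : (I → ℝ) →ₗ[ℝ] Module.Dual ℝ V where
  toFun x :=
    { toFun := fun v => dot x v.1
      map_add' := fun v w => by simp [dot_add_right]
      map_smul' := fun c v => by simp [dot_smul_right] }
  map_add' x y := LinearMap.ext fun v => dot_add_left x y v.1
  map_smul' c x := LinearMap.ext fun v => dot_smul_left c x v.1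

lemma ker_toDualV (V : Submodule ℝ (I → ℝ)) : LinearMap.ker (toDualV V) = perp V := by
  ext x
  simp only [LinearMap.mem_ker, mem_perp_iff]
  constructor
  · intro h v hv
    exact congrArg (fun φ => φ ⟨v, hv⟩) h
  · intro h
    apply LinearMap.ext
    rintro ⟨v, hv⟩
    exact h v hv

lemma finrank_perp_ge (V : Submodule ℝ (I → ℝ)) :
    Fintype.card I - Module.finrank ℝ V ≤ Module.finrank ℝ (perp V) := by
  have hrn := LinearMap.finrank_range_add_finrank_ker (toDualV V)
  rw [ker_toDualV] at hrn
  have h1 : Module.finrank ℝ (LinearMap.range (toDualV V)) ≤ Module.finrank ℝ V := by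
    calc Module.finrank ℝ (LinearMap.range (toDualV V))
        ≤ Module.finrank ℝ (Module.Dual ℝ V) := Submodule.finrank_le _
      _ = Module.finrank ℝ V := Subspace.dual_finrank_eq
  have h2 : Module.finrank ℝ (I → ℝ) = Fintype.card I :=
    Module.finrank_fintype_fun_eq_card ℝ
  omega

end DotLemmas
section Struct

variable {I : Type*} [Fintype I]

lemma ncard_support_le [DecidableEq I] (x : I → ℝ) (s : Finset I) (h : ∀ i ∈ s, x i = 0) :
    Set.ncard {i | x i ≠ 0} ≤ Fintype.card I - s.card := by
  have hsub : {i | x i ≠ 0} ⊆ ↑(sᶜ) := by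
    intro i hi
    simp only [Finset.coe_compl, Set.mem_compl_iff, Finset.mem_coe]
    intro hmem
    exact hi (h i hmem)
  calc Set.ncard {i | x i ≠ 0} ≤ (↑(sᶜ) : Set I).ncard :=
        Set.ncard_le_ncard hsub (Set.toFinite _)
    _ = (sᶜ).card := Set.ncard_coe_finset _
    _ = Fintype.card I - s.card := by rw [Finset.card_compl]

lemma support_full (x : I → ℝ) (s : Finset I)
    (hsub : ∀ i, x i ≠ 0 → i ∈ s) (hge : s.card ≤ Set.ncard {i | x i ≠ 0}) :
    ∀ i ∈ s, x i ≠ 0 := by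
  have hsub' : {i | x i ≠ 0} ⊆ ↑s := fun i hi => hsub i hi
  have heq := Set.eq_of_subset_of_ncard_le hsub'
    (by rw [Set.ncard_coe_finset]; exact hge) (Set.toFinite _)
  intro i hi
  exact heq.ge (Finset.mem_coe.mpr hi)

lemma unique_of_disj {W : Submodule ℝ (I → ℝ)} {s : Finset I}
    (hdisj : W ⊓ zeroOn (↑s : Set I) = ⊥) {x y : I → ℝ} (hxy : x - y ∈ W)
    (hx : ∀ i ∈ s, x i = 0) (hy : ∀ i ∈ s, y i = 0) : x = y := by
  have hmem : x - y ∈ W ⊓ zeroOn (↑s : Set I) := by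
    rw [Submodule.mem_inf]
    refine ⟨hxy, fun i hi => ?_⟩
    have hi' := Finset.mem_coe.mp hi
    simp [Pi.sub_apply, hx i hi', hy i hi']
  rw [hdisj, Submodule.mem_bot] at hmem
  exact sub_eq_zero.mp hmem

lemma sup_eq_top_of_finranks {W Z : Submodule ℝ (I → ℝ)} (hdisj : W ⊓ Z = ⊥)
    (hrank : Module.finrank ℝ W + Module.finrank ℝ Z = Fintype.card I) : W ⊔ Z = ⊤ := by
  apply Submodule.eq_top_of_finrank_eq
  have h := Submodule.finrank_sup_add_finrank_inf_eq W Z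
  rw [hdisj] at h
  rw [Module.finrank_fintype_fun_eq_card]
  have hbot : Module.finrank ℝ (⊥ : Submodule ℝ (I → ℝ)) = 0 := finrank_bot ℝ _
  omega

lemma exists_coord [DecidableEq I] {W : Submodule ℝ (I → ℝ)} {s : Finset I}
    (hsup : W ⊔ zeroOn (↑s : Set I) = ⊤) {j : I} (hj : j ∈ s) :
    ∃ v ∈ W, v j = 1 ∧ ∀ i ∈ s, i ≠ j → v i = 0 := by
  have hmem : (Pi.single j 1 : I → ℝ) ∈ W ⊔ zeroOn (↑s : Set I) := hsup ▸ Submodule.mem_top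
  rw [Submodule.mem_sup] at hmem
  obtain ⟨v, hv, z, hz, hvz⟩ := hmem
  refine ⟨v, hv, ?_, ?_⟩
  · have h1 := congrFun hvz j
    have h2 : z j = 0 := hz j (Finset.mem_coe.mpr hj)
    simp only [Pi.add_apply, Pi.single_eq_same] at h1
    linarith
  · intro i hi hne
    have h1 := congrFun hvz i
    have h2 : z i = 0 := hz i (Finset.mem_coe.mpr hi)
    have h3 : (Pi.single j 1 : I → ℝ) i = 0 := Pi.single_eq_of_ne hne 1
    simp only [Pi.add_apply, h3] at h1
    linarith

variable [DecidableEq I] (A : PolArr I) (b : Finset I) (hb : IsBasisSet A.V A.η b)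
include hb

lemma V_disj : A.V ⊓ zeroOn (↑b : Set I) = ⊥ := by
  rw [eq_bot_iff]
  intro v hv
  rw [Submodule.mem_inf] at hv
  obtain ⟨hv1, hv2⟩ := hv
  rw [Submodule.mem_bot]
  by_contra hvne
  obtain ⟨i, hi⟩ : ∃ i, v i ≠ 0 := by
    by_contra h; push_neg at h; exact hvne (funext h)
  have hinotb : i ∉ b := fun h => hi (hv2 i (Finset.mem_coe.mpr h))
  obtain ⟨x0, hx0V, hx0z⟩ := hb.2
  set x := x0 - (x0 i / v i) • v with hxdef
  have hxV : x - A.η ∈ A.V := by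
    have heq : x - A.η = (x0 - A.η) - (x0 i / v i) • v := sub_right_comm x0 _ A.η
    rw [heq]
    exact sub_mem hx0V (Submodule.smul_mem _ _ hv1)
  have hxz : ∀ j ∈ insert i b, x j = 0 := by
    intro j hj
    rcases Finset.mem_insert.mp hj with h | h
    · subst h
      simp only [hxdef, Pi.sub_apply, Pi.smul_apply, smul_eq_mul]
      rw [div_mul_cancel₀ _ hi]; ring
    · simp only [hxdef, Pi.sub_apply, Pi.smul_apply, smul_eq_mul]
      rw [hx0z j (Finset.mem_coe.mpr h), hv2 j (Finset.mem_coe.mpr h)]; ring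
  have h1 := ncard_support_le x (insert i b) hxz
  have h2 := A.cond_a x hxV
  have hcard : (insert i b).card = b.card + 1 := Finset.card_insert_of_notMem hinotb
  have hle : (insert i b).card ≤ Fintype.card I := Finset.card_le_univ _
  have hbd : b.card = Module.finrank ℝ A.V := hb.1
  omega

lemma V_sup : A.V ⊔ zeroOn (↑b : Set I) = ⊤ := by
  apply sup_eq_top_of_finranks (V_disj A b hb)
  rw [finrank_zeroOn]
  have h1 : b.card = Module.finrank ℝ A.V := hb.1
  have h2 : b.card ≤ Fintype.card I := Finset.card_le_univ _
  omega

lemma perp_disj : perp A.V ⊓ zeroOn (↑(bᶜ) : Set I) = ⊥ := by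
  rw [eq_bot_iff]
  intro v hv
  rw [Submodule.mem_inf] at hv
  obtain ⟨hv1, hv2⟩ := hv
  rw [Submodule.mem_bot]
  have hvtop : v ∈ A.V ⊔ zeroOn (↑b : Set I) := (V_sup A b hb) ▸ Submodule.mem_top
  rw [Submodule.mem_sup] at hvtop
  obtain ⟨w, hw, z, hz, hwz⟩ := hvtop
  have hdvw : dot v w = 0 := hv1 w hw
  have hdvz : dot v z = 0 := by
    apply Finset.sum_eq_zero
    intro i _
    by_cases hib : i ∈ b
    · rw [hz i (Finset.mem_coe.mpr hib), mul_zero]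
    · rw [hv2 i (Finset.mem_coe.mpr (Finset.mem_compl.mpr hib)), zero_mul]
  have hdvv : dot v v = 0 := by
    have h0 : dot v (w + z) = 0 := by rw [dot_add_right, hdvw, hdvz, add_zero]
    rwa [hwz] at h0
  have hterm := (Finset.sum_eq_zero_iff_of_nonneg
    (fun i _ => mul_self_nonneg (v i))).mp hdvv
  funext i
  exact mul_self_eq_zero.mp (hterm i (Finset.mem_univ i))

lemma finrank_perp_eq :
    Module.finrank ℝ (perp A.V) = Fintype.card I - Module.finrank ℝ A.V := by
  have hge := finrank_perp_ge A.V
  have h := Submodule.finrank_sup_add_finrank_inf_eq (perp A.V) (zeroOn (↑(bᶜ) : Set I))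
  rw [perp_disj A b hb] at h
  have hbot : Module.finrank ℝ (⊥ : Submodule ℝ (I → ℝ)) = 0 := finrank_bot ℝ _
  have hle := Submodule.finrank_le (perp A.V ⊔ zeroOn (↑(bᶜ) : Set I))
  rw [Module.finrank_fintype_fun_eq_card] at hle
  rw [finrank_zeroOn] at h
  have hc : (bᶜ).card = Fintype.card I - b.card := Finset.card_compl b
  have h1 : b.card = Module.finrank ℝ A.V := hb.1
  have h2 : b.card ≤ Fintype.card I := Finset.card_le_univ _
  omega

lemma perp_sup : perp A.V ⊔ zeroOn (↑(bᶜ) : Set I) = ⊤ := by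
  apply sup_eq_top_of_finranks (perp_disj A b hb)
  rw [finrank_zeroOn, finrank_perp_eq A b hb]
  have hc : (bᶜ).card = Fintype.card I - b.card := Finset.card_compl b
  have h1 : b.card = Module.finrank ℝ A.V := hb.1
  have h2 : b.card ≤ Fintype.card I := Finset.card_le_univ _
  omega

lemma primal_point :
    ∃ p : I → ℝ, p - A.η ∈ A.V ∧ (∀ i ∈ b, p i = 0) ∧ (∀ i ∉ b, p i ≠ 0) := by
  obtain ⟨p, hpV, hpz⟩ := hb.2
  have hpz' : ∀ i ∈ b, p i = 0 := fun i hi => hpz i (Finset.mem_coe.mpr hi)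
  refine ⟨p, hpV, hpz', ?_⟩
  have hsub : ∀ i, p i ≠ 0 → i ∈ bᶜ := fun i hi =>
    Finset.mem_compl.mpr (fun h => hi (hpz' i h))
  have hca := A.cond_a p hpV
  have hge : (bᶜ).card ≤ Set.ncard {i | p i ≠ 0} := by
    have hc : (bᶜ).card = Fintype.card I - b.card := Finset.card_compl b
    have h1 : b.card = Module.finrank ℝ A.V := hb.1
    omega
  have hfull := support_full p bᶜ hsub hge
  intro i hi
  exact hfull i (Finset.mem_compl.mpr hi)

lemma dual_point :
    ∃ q : I → ℝ, (∀ v ∈ A.V, dot (q + A.ξ) v = 0) ∧ (∀ i ∉ b, q i = 0) ∧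
      (∀ i ∈ b, q i ≠ 0) := by
  have hmem : (-A.ξ : I → ℝ) ∈ perp A.V ⊔ zeroOn (↑(bᶜ) : Set I) :=
    (perp_sup A b hb) ▸ Submodule.mem_top
  rw [Submodule.mem_sup] at hmem
  obtain ⟨u, hu, q, hq, huq⟩ := hmem
  have hqz : ∀ i ∉ b, q i = 0 := fun i hi =>
    hq i (Finset.mem_coe.mpr (Finset.mem_compl.mpr hi))
  have hqξ : q + A.ξ = -u := by
    have : u + q = -A.ξ := huq
    funext i
    have := congrFun this i
    simp only [Pi.add_apply, Pi.neg_apply] at this ⊢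
    linarith
  have hqperp : ∀ v ∈ A.V, dot (q + A.ξ) v = 0 := by
    rw [hqξ]
    exact fun v hv => (neg_mem hu : -u ∈ perp A.V) v hv
  refine ⟨q, hqperp, hqz, ?_⟩
  have hxperp : (-q : I → ℝ) - A.ξ ∈ perp A.V := by
    have : (-q : I → ℝ) - A.ξ = -(q + A.ξ) := by funext i; simp; ring
    rw [this, hqξ, neg_neg]
    exact hu
  have hcb := A.cond_b (-q) hxperp
  have hsub : ∀ i, (-q : I → ℝ) i ≠ 0 → i ∈ b := by
    intro i hi
    by_contra h
    exact hi (by simp [hqz i h])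
  have hge : b.card ≤ Set.ncard {i | (-q : I → ℝ) i ≠ 0} := by
    have h1 : b.card = Module.finrank ℝ A.V := hb.1
    omega
  have hfull := support_full (-q) b hsub hge
  intro i hi
  have := hfull i hi
  simpa using this
end Struct
section Char

variable {I : Type*} [Fintype I] [DecidableEq I]

lemma isSign_mul_self {α : I → ℝ} (hα : IsSign α) (i : I) : α i * α i = 1 := by
  rcases hα i with h | h <;> rw [h] <;> norm_num

lemma isSign_ne_zero {α : I → ℝ} (hα : IsSign α) (i : I) : α i ≠ 0 := by
  rcases hα i with h | h <;> rw [h] <;> norm_num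

lemma isSign_abs {α : I → ℝ} (hα : IsSign α) (i : I) : |α i| = 1 := by
  rcases hα i with h | h <;> rw [h] <;> norm_num

lemma dot_on_V {V : Submodule ℝ (I → ℝ)} {ξ q : I → ℝ} {b : Finset I}
    (hqperp : ∀ v ∈ V, dot (q + ξ) v = 0) (hqz : ∀ i ∉ b, q i = 0)
    {v : I → ℝ} (hv : v ∈ V) : dot ξ v = -∑ i ∈ b, q i * v i := by
  have h1 : dot q v + dot ξ v = 0 := by
    have h := hqperp v hv; rwa [dot_add_left] at h
  have h2 : dot q v = ∑ i ∈ b, q i * v i := by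
    rw [dot]
    exact (Finset.sum_subset (Finset.subset_univ b)
      (fun i _ hi => by rw [hqz i hi, zero_mul])).symm
  linarith

lemma muSpec_char (V : Submodule ℝ (I → ℝ)) (η ξ : I → ℝ) (b : Finset I)
    (p q : I → ℝ)
    (hpV : p - η ∈ V) (hpz : ∀ i ∈ b, p i = 0) (hpnz : ∀ i ∉ b, p i ≠ 0)
    (hqperp : ∀ v ∈ V, dot (q + ξ) v = 0) (hqz : ∀ i ∉ b, q i = 0)
    (hqnz : ∀ i ∈ b, q i ≠ 0)
    (huniq : ∀ x : I → ℝ, x - η ∈ V → (∀ i ∈ b, x i = 0) → x = p)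
    (hsurj : ∀ j ∈ b, ∃ v ∈ V, v j = 1 ∧ ∀ i ∈ b, i ≠ j → v i = 0)
    (α : I → ℝ) (hα : IsSign α) :
    MuSpec V η ξ b α ↔ (∀ i ∉ b, 0 < α i * p i) ∧ (∀ i ∈ b, 0 < α i * q i) := by
  have hqid : ∀ (i : I) (x : I → ℝ), q i * x i = (α i * q i) * (α i * x i) := by
    intro i x
    have h := isSign_mul_self hα i
    calc q i * x i = (α i * α i) * (q i * x i) := by rw [h, one_mul]
      _ = (α i * q i) * (α i * x i) := by ring
  constructor
  · rintro ⟨hfeas, hbdd, p', hp'flat, hp'Δ, hopt⟩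
    have hp'b : ∀ i ∈ b, p' i = 0 := fun i hi => hp'flat.2 i (Finset.mem_coe.mpr hi)
    have hp'eq : p' = p := huniq p' hp'flat.1 hp'b
    rw [hp'eq] at hp'Δ hopt
    have hpos1 : ∀ i ∉ b, 0 < α i * p i := by
      intro i hi
      have ha := hp'Δ.2 i
      have hne : α i * p i ≠ 0 := mul_ne_zero (isSign_ne_zero hα i) (hpnz i hi)
      exact lt_of_le_of_ne ha (Ne.symm hne)
    refine ⟨hpos1, ?_⟩
    intro j hj
    by_contra hneg
    have hne : α j * q j ≠ 0 := mul_ne_zero (isSign_ne_zero hα j) (hqnz j hj)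
    have hlt : α j * q j < 0 := lt_of_le_of_ne (not_lt.mp hneg) hne
    obtain ⟨v, hvV, hvj, hvz⟩ := hsurj j hj
    obtain ⟨m, hmpos, hmle⟩ : ∃ m : ℝ, 0 < m ∧ ∀ i ∉ b, m ≤ α i * p i := by
      by_cases hne' : (bᶜ).Nonempty
      · refine ⟨(bᶜ).inf' hne' (fun i => α i * p i), ?_, ?_⟩
        · rw [Finset.lt_inf'_iff]
          intro i hi
          exact hpos1 i (Finset.mem_compl.mp hi)
        · exact fun i hi => Finset.inf'_le _ (Finset.mem_compl.mpr hi)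
      · exact ⟨1, one_pos, fun i hi => absurd ⟨i, Finset.mem_compl.mpr hi⟩ hne'⟩
    obtain ⟨c, hc0, hcle⟩ : ∃ c : ℝ, 0 ≤ c ∧ ∀ i, |v i| ≤ c := by
      refine ⟨Finset.univ.sup' ⟨j, Finset.mem_univ j⟩ (fun i => |v i|), ?_, fun i => ?_⟩
      · exact le_trans (abs_nonneg (v j)) (Finset.le_sup' (fun i => |v i|) (Finset.mem_univ j))
      · exact Finset.le_sup' (fun i => |v i|) (Finset.mem_univ i)
    obtain ⟨t, htpos, htb⟩ : ∃ t : ℝ, 0 < t ∧ ∀ i, t * |v i| < m := by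
      have hcpos : (0:ℝ) < c + 1 := by linarith
      refine ⟨m / (c + 1), div_pos hmpos hcpos, fun i => ?_⟩
      have ht0 : 0 < m / (c + 1) := div_pos hmpos hcpos
      have h1 : m / (c+1) * |v i| ≤ m / (c+1) * c :=
        mul_le_mul_of_nonneg_left (hcle i) ht0.le
      have h2 : m / (c+1) * (c+1) = m := div_mul_cancel₀ m (ne_of_gt hcpos)
      have h4 : m / (c+1) * c + m / (c+1) = m := by
        calc m / (c+1) * c + m / (c+1) = m / (c+1) * (c+1) := by ring
          _ = m := h2
      linarith
    set x : I → ℝ := p + t • (α j • v) with hx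
    have hxapp : ∀ i, x i = p i + t * (α j * v i) := fun i => by
      simp [hx, Pi.add_apply, Pi.smul_apply, smul_eq_mul]
    have hxΔ : x ∈ Delta V η α := by
      refine ⟨?_, ?_⟩
      · rw [hx, add_sub_right_comm p _ η]
        exact Submodule.add_mem _ hpV (Submodule.smul_mem _ _ (Submodule.smul_mem _ _ hvV))
      · intro i
        by_cases hib : i ∈ b
        · by_cases hij : i = j
          · subst hij
            rw [hxapp i, hpz i hib, hvj]
            have hs := isSign_mul_self hα i
            nlinarith
          · rw [hxapp i, hpz i hib, hvz i hib hij]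
            norm_num
        · rw [hxapp i]
          have h1 : m ≤ α i * p i := hmle i hib
          have h2 : t * |v i| < m := htb i
          have h5 : |α i * (t * (α j * v i))| = t * |v i| := by
            rw [abs_mul, abs_mul, abs_mul, isSign_abs hα i, isSign_abs hα j,
              abs_of_pos htpos]
            ring
          have h6 := neg_abs_le (α i * (t * (α j * v i)))
          rw [h5] at h6
          have expand : α i * (p i + t * (α j * v i))
              = α i * p i + α i * (t * (α j * v i)) := by ring
          rw [expand]
          linarith
    have hxnep : x ≠ p := by
      intro h
      have h1 := congrFun h j
      rw [hxapp j, hpz j hj, hvj] at h1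
      have h7 : t * α j = 0 := by nlinarith [h1]
      rcases mul_eq_zero.mp h7 with h' | h'
      · exact absurd h' (ne_of_gt htpos)
      · exact isSign_ne_zero hα j h'
    have hlt2 := hopt x hxΔ hxnep
    have hxp : x - p = t • (α j • v) := by rw [hx]; exact add_sub_cancel_left p _
    have hsum : ∑ i ∈ b, q i * v i = q j := by
      rw [Finset.sum_eq_single_of_mem j hj
        (fun i hi hne' => by rw [hvz i hi hne', mul_zero]), hvj, mul_one]
    have hdot : dot ξ (x - p) = t * (α j * -(q j)) := by
      rw [hxp, dot_smul_right, dot_smul_right, dot_on_V hqperp hqz hvV, hsum]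
    rw [hdot] at hlt2
    nlinarith [mul_pos htpos (neg_pos.mpr hlt)]
  · rintro ⟨h1, h2⟩
    have hpΔ : p ∈ Delta V η α := by
      refine ⟨hpV, fun i => ?_⟩
      by_cases hib : i ∈ b
      · rw [hpz i hib, mul_zero]
      · exact (h1 i hib).le
    have key : ∀ v ∈ V, (∀ i ∈ b, 0 ≤ α i * v i) →
        dot ξ v ≤ 0 ∧ (dot ξ v = 0 → ∀ i ∈ b, v i = 0) := by
      intro v hv hsign
      have heq := dot_on_V hqperp hqz hv
      have hterm : ∀ i ∈ b, 0 ≤ q i * v i := by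
        intro i hi
        rw [hqid i v]
        exact mul_nonneg (h2 i hi).le (hsign i hi)
      have hsum : 0 ≤ ∑ i ∈ b, q i * v i := Finset.sum_nonneg hterm
      refine ⟨by rw [heq]; linarith, ?_⟩
      intro h0 i hi
      rw [heq] at h0
      have hsum0 : ∑ i ∈ b, q i * v i = 0 := by linarith
      have h3 := (Finset.sum_eq_zero_iff_of_nonneg hterm).mp hsum0 i hi
      rcases mul_eq_zero.mp h3 with h' | h'
      · exact absurd h' (hqnz i hi)
      · exact h'
    refine ⟨⟨p, hpΔ⟩, ?_, ?_⟩
    · refine ⟨0, fun y hy => ?_⟩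
      obtain ⟨v, ⟨hvV, hvs⟩, rfl⟩ := hy
      exact (key v hvV (fun i _ => hvs i)).1
    · refine ⟨p, ⟨hpV, fun i hi => hpz i (Finset.mem_coe.mp hi)⟩, hpΔ, ?_⟩
      intro x hxΔ hxne
      have hxpV : x - p ∈ V := by
        rw [← sub_sub_sub_cancel_right x p η]
        exact sub_mem hxΔ.1 hpV
      have hsign : ∀ i ∈ b, 0 ≤ α i * (x - p) i := by
        intro i hi
        have h4 : (x - p) i = x i := by simp [Pi.sub_apply, hpz i hi]
        rw [h4]
        exact hxΔ.2 i
      obtain ⟨hle, heq0⟩ := key (x - p) hxpV hsign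
      rcases lt_or_eq_of_le hle with h | h
      · exact h
      · exfalso
        have hxb : ∀ i ∈ b, x i = 0 := by
          intro i hi
          have h3 := heq0 h i hi
          have h4 : (x - p) i = x i := by simp [Pi.sub_apply, hpz i hi]
          rw [h4] at h3
          exact h3
        exact hxne (huniq x hxΔ.1 hxb)

end Char
/-- **Compatibility of `μ` with Gale duality.**  For every basis `b` of `𝒱`, the
complement `bᶜ = I ∖ b` is a basis of the Gale dual `𝒱^∨ = (V^⊥, -ξ, -η)`, and
`μ(b) = μ^∨(bᶜ)`: a sign vector is the optimal chamber for `b` in `𝒱` if and only if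
it is the optimal chamber for `bᶜ` in `𝒱^∨`. -/
theorem mu_complement [DecidableEq I] (A : PolArr I) (b : Finset I)
    (hb : IsBasisSet A.V A.η b) :
    IsBasisSet (perp A.V) (-A.ξ) bᶜ ∧
    ∀ α : I → ℝ, IsSign α →
      (MuSpec A.V A.η A.ξ b α ↔ MuSpec (perp A.V) (-A.ξ) (-A.η) bᶜ α) := by
  obtain ⟨p, hpV, hpz, hpnz⟩ := primal_point A b hb
  obtain ⟨q, hqperp, hqz, hqnz⟩ := dual_point A b hb
  have hdisjV := V_disj A b hb
  have hdisjP := perp_disj A b hb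
  have hsupV := V_sup A b hb
  have hsupP := perp_sup A b hb
  have hcard : b.card = Module.finrank ℝ A.V := hb.1
  have hqperp' : q + A.ξ ∈ perp A.V := hqperp
  have huniq : ∀ x : I → ℝ, x - A.η ∈ A.V → (∀ i ∈ b, x i = 0) → x = p := by
    intro x hx hz
    refine unique_of_disj hdisjV ?_ hz hpz
    rw [← sub_sub_sub_cancel_right x p A.η]
    exact sub_mem hx hpV
  have huniq' : ∀ x : I → ℝ, x - (-A.ξ) ∈ perp A.V → (∀ i ∈ bᶜ, x i = 0) → x = q := by
    intro x hx hz
    refine unique_of_disj hdisjP ?_ hz (fun i hi => hqz i (Finset.mem_compl.mp hi))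
    have hx' : x + A.ξ ∈ perp A.V := by rwa [sub_neg_eq_add] at hx
    have heq : x - q = (x + A.ξ) - (q + A.ξ) := by ring
    rw [heq]
    exact sub_mem hx' hqperp'
  refine ⟨⟨?_, ⟨q, ?_, ?_⟩⟩, ?_⟩
  · rw [Finset.card_compl, hcard, finrank_perp_eq A b hb]
  · rw [sub_neg_eq_add]
    exact hqperp'
  · intro i hi
    exact hqz i (Finset.mem_compl.mp (Finset.mem_coe.mp hi))
  · intro α hα
    rw [muSpec_char A.V A.η A.ξ b p q hpV hpz hpnz hqperp hqz hqnz huniq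
      (fun j hj => exists_coord hsupV hj) α hα]
    rw [muSpec_char (perp A.V) (-A.ξ) (-A.η) bᶜ q p
      (by rw [sub_neg_eq_add]; exact hqperp')
      (fun i hi => hqz i (Finset.mem_compl.mp hi))
      (fun i hi => hqnz i (by simpa using hi))
      (by
        intro w hw
        rw [← sub_eq_add_neg, dot_comm]
        exact hw _ hpV)
      (fun i hi => hpz i (by simpa using hi))
      (fun i hi => hpnz i (Finset.mem_compl.mp hi))
      huniq'
      (fun j hj => exists_coord hsupP hj) α hα]
    constructor
    · rintro ⟨h1, h2⟩
      exact ⟨fun i hi => h2 i (by simpa using hi), fun i hi => h1 i (Finset.mem_compl.mp hi)⟩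
    · rintro ⟨h1, h2⟩
      exact ⟨fun i hi => h2 i (Finset.mem_compl.mpr hi), fun i hi => h1 i (by simpa using hi)⟩
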